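/- arXiv:quant-ph/0509206 — 4 statements merged into one kernel-verified Lean document; each statement's English description precedes it below -/
import Mathlib

section
/- (Knuth) Fix integers 1 ≤ r and n with 2r ≤ n. Let J_{n,r,r−1} be the 0–1 matrix indexed by r-element subsets of {1,…,n}, whose (s,t) entry is 1 if and only if |s ∩ t| = r − 1. Then the eigenvalues of J_{n,r,r−1} are exactly the r + 1 numbers λ_j = (r − j)(n − r) − j(r − j + 1) for j = 0, 1, …, r: every eigenvalue equals some λ_j, and each λ_j occurs as an eigenvalue. -/
/-!
Let `C` be the inclusion matrix of `r`-subsets in `(r+1)`-subsets of an `n`-set. Counting common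
subsets and supersets gives `C Cᵀ = J_{r+1} + (r+1) I` and `Cᵀ C = J_r + (n-r) I`. Since `AB` and
`BA` have the same nonzero eigenvalues, the spectrum of `J_{r+1}` consists of the spectrum of `J_r`
shifted by `n - 2r - 1`, together with `-(r+1)` when `C Cᵀ` is singular; and it is, because
`C` has `binom(n, r) < binom(n, r+1)` columns when `2(r+1) ≤ n`. Induction from `J_0 = 0` gives
the `λ_j`. The argument works over any field.
-/

open Matrix Finset

section Eigenvalues

open Module End

variable {K m k : Type*} [Field K] [Fintype m] [Fintype k] [DecidableEq m] [DecidableEq k]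

theorem Matrix.hasEigenvalue_toLin'_iff {M : Matrix m m K} {μ : K} :
    HasEigenvalue (toLin' M) μ ↔ ∃ v, v ≠ 0 ∧ M *ᵥ v = μ • v := by
  simp only [hasEigenvalue_iff, Submodule.ne_bot_iff, mem_eigenspace_iff, toLin'_apply]
  exact ⟨fun ⟨v, hv, h0⟩ => ⟨v, h0, hv⟩, fun ⟨v, h0, hv⟩ => ⟨v, hv, h0⟩⟩

theorem Matrix.hasEigenvalue_toLin'_add_smul_one_iff {M : Matrix m m K} {c μ : K} :
    HasEigenvalue (toLin' (M + c • 1)) μ ↔ HasEigenvalue (toLin' M) (μ - c) := by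
  rw [map_add, map_smul, toLin'_one, ← hasEigenvalue_add_iff]

theorem Matrix.hasEigenvalue_toLin'_mul_swap {A : Matrix m k K} {B : Matrix k m K} {μ : K}
    (hμ : μ ≠ 0) (h : HasEigenvalue (toLin' (A * B)) μ) : HasEigenvalue (toLin' (B * A)) μ := by
  obtain ⟨v, hv, hAB⟩ := hasEigenvalue_toLin'_iff.1 h
  rw [← mulVec_mulVec] at hAB
  refine hasEigenvalue_toLin'_iff.2 ⟨B *ᵥ v, fun hBv => ?_, ?_⟩
  · rw [hBv, mulVec_zero, eq_comm, smul_eq_zero] at hAB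
    exact hAB.elim hμ hv
  · rw [← mulVec_mulVec, hAB, mulVec_smul]

theorem Matrix.hasEigenvalue_toLin'_mul_comm {A : Matrix m k K} {B : Matrix k m K} {μ : K}
    (hμ : μ ≠ 0) : HasEigenvalue (toLin' (A * B)) μ ↔ HasEigenvalue (toLin' (B * A)) μ :=
  ⟨hasEigenvalue_toLin'_mul_swap hμ, hasEigenvalue_toLin'_mul_swap hμ⟩

theorem Matrix.hasEigenvalue_toLin'_mul_zero_of_card_lt (A : Matrix m k K) (B : Matrix k m K)
    (h : Fintype.card k < Fintype.card m) : HasEigenvalue (toLin' (A * B)) 0 := by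
  have hB : LinearMap.ker (toLin' B) ≠ ⊥ :=
    LinearMap.ker_ne_bot_of_finrank_lt (by simpa using h)
  rw [hasEigenvalue_iff, eigenspace_zero, toLin'_mul]
  exact ne_bot_of_le_ne_bot hB (LinearMap.ker_le_ker_comp _ _)

end Eigenvalues

theorem Nat.choose_lt_choose_succ {n r : ℕ} (h : 2 * (r + 1) ≤ n) :
    n.choose r < n.choose (r + 1) := by
  have key := Nat.choose_succ_right_eq n r
  have hpos : 0 < n.choose r := Nat.choose_pos (by omega)
  have : n.choose r * (r + 1) < n.choose r * (n - r) := Nat.mul_lt_mul_of_pos_left (by omega) hpos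
  exact Nat.lt_of_mul_lt_mul_right (key ▸ this)

theorem Finset.card_inter_lt_of_card_eq_of_ne {α : Type*} [DecidableEq α] {s t : Finset α} {k : ℕ}
    (hs : #s = k) (ht : #t = k) (hst : s ≠ t) : #(s ∩ t) < k := by
  have hlt : s ∩ t ⊂ s := by
    refine inter_subset_left.ssubset_of_ne fun h => hst ?_
    exact eq_of_subset_of_card_le (inter_eq_left.1 h) (by omega)
  exact hs ▸ card_lt_card hlt

section Counting

variable {α : Type*} [Fintype α] [DecidableEq α]

theorem Finset.card_filter_subset_of_card_eq (u : Finset α) (k : ℕ) :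
    #{t : {t : Finset α // #t = k} | t.1 ⊆ u} = (#u).choose k := by
  rw [← card_powersetCard, ← card_map (Function.Embedding.subtype _)]
  congr 1
  ext t
  simp [mem_powersetCard, and_comm]

theorem Finset.card_filter_superset_of_card_eq {u : Finset α} {k : ℕ} (hu : #u ≤ k) :
    #{s : {s : Finset α // #s = k} | u ⊆ s.1} = (Fintype.card α - #u).choose (k - #u) := by
  rw [← card_compl, ← card_powersetCard]
  refine card_bij' (fun s _ => s.1 \ u) (fun w hw => ⟨w ∪ u, ?_⟩) ?_ ?_ ?_ ?_
  · rw [mem_powersetCard, subset_compl_iff_disjoint_right] at hw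
    rw [card_union_of_disjoint hw.1, hw.2]
    omega
  · rintro ⟨s, hs⟩ hus
    simp only [mem_filter, mem_univ, true_and] at hus
    rw [mem_powersetCard, card_sdiff_of_subset hus, hs]
    exact ⟨fun x hx => mem_compl.2 (mem_sdiff.1 hx).2, rfl⟩
  · intro w hw
    simp
  · rintro ⟨s, hs⟩ hus
    simp only [mem_filter, mem_univ, true_and] at hus
    simp [sdiff_union_of_subset hus]
  · intro w hw
    rw [mem_powersetCard, subset_compl_iff_disjoint_right] at hw
    simp [union_sdiff_cancel_right hw.1]

end Counting

section Johnson

variable (α K : Type*) [Fintype α] [DecidableEq α] [Field K]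

/-- Ones where `#(s ∩ t) + 1 = r` rather than `#(s ∩ t) = r - 1`: the two agree for `r ≥ 1`,
and this form makes `johnsonMatrix α K 0 = 0`. -/
def johnsonMatrix (r : ℕ) : Matrix {s : Finset α // #s = r} {s : Finset α // #s = r} K :=
  of fun s t => if #(s.1 ∩ t.1) + 1 = r then 1 else 0

def inclusionMatrix (r : ℕ) : Matrix {s : Finset α // #s = r + 1} {t : Finset α // #t = r} K :=
  of fun s t => if t.1 ⊆ s.1 then 1 else 0

def johnsonEigenvalue (n r j : ℕ) : K := (r - j) * (n - r) - j * (r - j + 1)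

variable {α K}

theorem johnsonEigenvalue_self (n r : ℕ) : johnsonEigenvalue K n r r = -r := by
  simp [johnsonEigenvalue]

theorem johnsonEigenvalue_succ (n r j : ℕ) :
    johnsonEigenvalue K n (r + 1) j = johnsonEigenvalue K n r j + (n - r) - (r + 1) := by
  simp only [johnsonEigenvalue]
  push_cast
  ring

theorem exists_johnsonEigenvalue_succ_iff {n r : ℕ} {μ : K} (hμ : μ + (r + 1) ≠ 0) :
    (∃ j ≤ r, μ + (r + 1) - (n - r) = johnsonEigenvalue K n r j) ↔
      ∃ j ≤ r + 1, μ = johnsonEigenvalue K n (r + 1) j := by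
  constructor
  · rintro ⟨j, hj, h⟩
    exact ⟨j, by omega, by rw [johnsonEigenvalue_succ]; linear_combination h⟩
  · rintro ⟨j, hj, h⟩
    have hj' : j ≠ r + 1 := by
      rintro rfl
      rw [johnsonEigenvalue_self] at h
      push_cast at h
      exact hμ (by linear_combination h)
    exact ⟨j, by omega, by rw [johnsonEigenvalue_succ] at h; linear_combination h⟩

omit [Fintype α] in
theorem johnsonMatrix_zero : johnsonMatrix α K 0 = 0 := by
  ext s t
  simp [johnsonMatrix]

theorem inclusionMatrix_mul_transpose (r : ℕ) :
    inclusionMatrix α K r * (inclusionMatrix α K r)ᵀ =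
      johnsonMatrix α K (r + 1) + (r + 1 : K) • 1 := by
  ext s s'
  simp only [mul_apply, inclusionMatrix, johnsonMatrix, transpose_apply, of_apply, Matrix.add_apply,
    Matrix.smul_apply, one_apply, ite_zero_mul_ite_zero, mul_one, ← subset_inter_iff, sum_boole,
    card_filter_subset_of_card_eq]
  rcases eq_or_ne s s' with rfl | hne
  · simp [s.2, Nat.choose_succ_self_right]
  have hlt := card_inter_lt_of_card_eq_of_ne s.2 s'.2 (Subtype.coe_injective.ne hne)
  rcases (Nat.lt_succ_iff.1 hlt).eq_or_lt with heq | hlt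
  · simp [heq, hne]
  · simp [Nat.choose_eq_zero_of_lt hlt, hne, hlt.ne]

theorem transpose_inclusionMatrix_mul (r : ℕ) :
    (inclusionMatrix α K r)ᵀ * inclusionMatrix α K r =
      johnsonMatrix α K r + ((Fintype.card α : K) - r) • 1 := by
  ext t t'
  simp only [mul_apply, inclusionMatrix, johnsonMatrix, transpose_apply, of_apply, Matrix.add_apply,
    Matrix.smul_apply, one_apply, ite_zero_mul_ite_zero, mul_one, ← union_subset_iff, sum_boole]
  rcases eq_or_ne t t' with rfl | hne
  · rw [union_self, card_filter_superset_of_card_eq (by omega), t.2, Nat.add_sub_cancel_left,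
      Nat.choose_one_right, Nat.cast_sub (t.2 ▸ card_le_univ _)]
    simp [t.2]
  have hlt := card_inter_lt_of_card_eq_of_ne t.2 t'.2 (Subtype.coe_injective.ne hne)
  have hsum := card_union_add_card_inter t.1 t'.1
  rw [t.2, t'.2] at hsum
  rcases (show r + 1 ≤ #(t.1 ∪ t'.1) by omega).eq_or_lt with heq | hgt
  · rw [card_filter_superset_of_card_eq heq.ge, ← heq]
    simp [hne, show #(t.1 ∩ t'.1) + 1 = r by omega]
  · have hnone : #{s : {s : Finset α // #s = r + 1} | t.1 ∪ t'.1 ⊆ s.1} = 0 :=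
      card_eq_zero.2 <| filter_eq_empty_iff.2 fun s _ hs => (card_le_card hs).not_gt (by rwa [s.2])
    simp [hnone, hne, show #(t.1 ∩ t'.1) + 1 ≠ r by omega]

theorem hasEigenvalue_johnsonMatrix_iff {r : ℕ} (hr : 2 * r ≤ Fintype.card α) {μ : K} :
    Module.End.HasEigenvalue (toLin' (johnsonMatrix α K r)) μ ↔
      ∃ j ≤ r, μ = johnsonEigenvalue K (Fintype.card α) r j := by
  induction r generalizing μ with
  | zero =>
    have hv : (fun _ => 1 : {s : Finset α // #s = 0} → K) ≠ 0 :=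
      Function.ne_iff.2 ⟨⟨∅, card_empty⟩, one_ne_zero⟩
    rw [johnsonMatrix_zero, hasEigenvalue_toLin'_iff]
    simp only [zero_mulVec, nonpos_iff_eq_zero, exists_eq_left, johnsonEigenvalue_self,
      Nat.cast_zero, neg_zero]
    refine ⟨fun ⟨v, hv0, h⟩ => (smul_eq_zero.1 h.symm).resolve_right hv0, ?_⟩
    rintro rfl
    exact ⟨_, hv, (zero_smul K _).symm⟩
  | succ r ih =>
    set C := inclusionMatrix α K r
    have hshift : Module.End.HasEigenvalue (toLin' (johnsonMatrix α K (r + 1))) μ ↔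
        Module.End.HasEigenvalue (toLin' (C * Cᵀ)) (μ + (r + 1)) := by
      rw [inclusionMatrix_mul_transpose, hasEigenvalue_toLin'_add_smul_one_iff,
        add_sub_cancel_right]
    rw [hshift]
    by_cases hμ : μ + (r + 1) = 0
    · have hcard : Fintype.card {t : Finset α // #t = r} <
          Fintype.card {s : Finset α // #s = r + 1} := by
        simpa only [Fintype.card_finset_len] using Nat.choose_lt_choose_succ hr
      refine iff_of_true (hμ ▸ hasEigenvalue_toLin'_mul_zero_of_card_lt _ _ hcard)
        ⟨r + 1, le_rfl, ?_⟩
      rw [johnsonEigenvalue_self]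
      push_cast
      linear_combination hμ
    · rw [hasEigenvalue_toLin'_mul_comm hμ, transpose_inclusionMatrix_mul,
        hasEigenvalue_toLin'_add_smul_one_iff, ih (by omega), exists_johnsonEigenvalue_succ_iff hμ]

end Johnson

/-- (Knuth) For `1 ≤ r` and `2r ≤ n`, the eigenvalues of the 0-1 matrix `J_{n,r,r-1}` indexed
by `r`-element subsets of `{1,…,n}`, with `(s,t)` entry `1` iff `|s ∩ t| = r - 1`, are exactly
the `r + 1` numbers `λ_j = (r - j)(n - r) - j(r - j + 1)` for `0 ≤ j ≤ r`. -/
theorem stmt_4 (n r : ℕ) (hr : 1 ≤ r) (hn : 2 * r ≤ n)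
    (J : Matrix {s : Finset (Fin n) // s.card = r} {s : Finset (Fin n) // s.card = r} ℝ)
    (hJ : ∀ s t, J s t = if ((s : Finset (Fin n)) ∩ (t : Finset (Fin n))).card = r - 1
      then (1 : ℝ) else 0)
    (lam : ℕ → ℝ)
    (hlam : ∀ j, lam j =
      ((r : ℝ) - (j : ℝ)) * ((n : ℝ) - (r : ℝ)) - (j : ℝ) * ((r : ℝ) - (j : ℝ) + 1)) :
    (∀ μ : ℝ, Module.End.HasEigenvalue (Matrix.toLin' J) μ → ∃ j ≤ r, μ = lam j) ∧
    (∀ j ≤ r, Module.End.HasEigenvalue (Matrix.toLin' J) (lam j)) := by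
  have hJ' : J = johnsonMatrix (Fin n) ℝ r := by
    ext s t
    rw [hJ, johnsonMatrix, of_apply]
    exact if_congr (by omega) rfl rfl
  have hlam' : lam = johnsonEigenvalue ℝ n r := funext hlam
  have hspec (μ : ℝ) := hasEigenvalue_johnsonMatrix_iff (α := Fin n) (μ := μ) (by simpa using hn)
  simp only [Fintype.card_fin] at hspec
  subst hJ' hlam'
  exact ⟨fun μ hμ => (hspec μ).1 hμ, fun j hj => (hspec _).2 ⟨j, hj, rfl⟩⟩
end

section
/- Let H₁ and H₂ be finite-dimensional complex inner product spaces, let A, B : H₁ → H₂ be linear isometries (A†A = I = B†B), and define the walk operator W = (2BB† − I)(2AA† − I). Suppose w and v are unit vectors in H₁ and δ ∈ [0,1] is a real number with A†B v = δ w and B†A w = δ v (a singular pair of the discriminant D = A†B). Then W(Aw) = 2δ (Bv) − Aw and W(Bv) = (4δ² − 1) Bv − 2δ Aw; in particular the subspace spanned by {Aw, Bv} is invariant under W. -/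
/-- For isometries `A B : H₁ → H₂` (`A†A = I = B†B`) and the walk operator
`W = (2BB† - I)(2AA† - I)`, if `w, v` are unit vectors with `A†B v = δ w` and `B†A w = δ v`
for some `δ ∈ [0,1]` (a singular pair of the discriminant `D = A†B`), then
`W(Aw) = 2δ (Bv) - Aw` and `W(Bv) = (4δ² - 1) Bv - 2δ (Aw)`; in particular the span of
`{Aw, Bv}` is invariant under `W`. -/
theorem stmt_9 {H₁ H₂ : Type*}
    [NormedAddCommGroup H₁] [InnerProductSpace ℂ H₁] [FiniteDimensional ℂ H₁]
    [NormedAddCommGroup H₂] [InnerProductSpace ℂ H₂] [FiniteDimensional ℂ H₂]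
    (A B : H₁ →ₗ[ℂ] H₂)
    (hA : LinearMap.adjoint A ∘ₗ A = LinearMap.id)
    (hB : LinearMap.adjoint B ∘ₗ B = LinearMap.id)
    (W : H₂ →ₗ[ℂ] H₂)
    (hW : W = ((2 : ℂ) • (B ∘ₗ LinearMap.adjoint B) - LinearMap.id) ∘ₗ
      ((2 : ℂ) • (A ∘ₗ LinearMap.adjoint A) - LinearMap.id))
    (w v : H₁) (hw : ‖w‖ = 1) (hv : ‖v‖ = 1)
    (δ : ℝ) (hδ : δ ∈ Set.Icc (0 : ℝ) 1)
    (h₁ : (LinearMap.adjoint A ∘ₗ B) v = (δ : ℂ) • w)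
    (h₂ : (LinearMap.adjoint B ∘ₗ A) w = (δ : ℂ) • v) :
    W (A w) = (2 * (δ : ℂ)) • (B v) - A w ∧
    W (B v) = ((4 * (δ : ℂ) ^ 2 - 1)) • (B v) - (2 * (δ : ℂ)) • (A w) ∧
    ∀ x ∈ Submodule.span ℂ ({A w, B v} : Set H₂),
      W x ∈ Submodule.span ℂ ({A w, B v} : Set H₂) := by
  have hAw : LinearMap.adjoint A (A w) = w := by
    have := LinearMap.congr_fun hA w; simpa using this
  have hBv : LinearMap.adjoint B (B v) = v := by
    have := LinearMap.congr_fun hB v; simpa using this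
  have h1 : LinearMap.adjoint A (B v) = (δ : ℂ) • w := h₁
  have h2 : LinearMap.adjoint B (A w) = (δ : ℂ) • v := h₂
  have rA : ∀ x : H₂, (((2 : ℂ) • (A ∘ₗ LinearMap.adjoint A) - LinearMap.id : H₂ →ₗ[ℂ] H₂)) x
      = (2 : ℂ) • A (LinearMap.adjoint A x) - x := by
    intro x
    rw [LinearMap.sub_apply, LinearMap.smul_apply, LinearMap.comp_apply, LinearMap.id_apply]
  have rB : ∀ x : H₂, (((2 : ℂ) • (B ∘ₗ LinearMap.adjoint B) - LinearMap.id : H₂ →ₗ[ℂ] H₂)) x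
      = (2 : ℂ) • B (LinearMap.adjoint B x) - x := by
    intro x
    rw [LinearMap.sub_apply, LinearMap.smul_apply, LinearMap.comp_apply, LinearMap.id_apply]
  have e1 : W (A w) = (2 * (δ : ℂ)) • (B v) - A w := by
    rw [hW, LinearMap.comp_apply, rA, hAw]
    rw [show (2 : ℂ) • A w - A w = A w from by rw [two_smul]; abel]
    rw [rB, h2, map_smul, smul_smul, mul_comm]
  have e2 : W (B v) = ((4 * (δ : ℂ) ^ 2 - 1)) • (B v) - (2 * (δ : ℂ)) • (A w) := by
    rw [hW, LinearMap.comp_apply, rA, h1, map_smul, rB]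
    simp only [map_smul, map_sub, h2, hBv]
    match_scalars <;> ring
  refine ⟨e1, e2, ?_⟩
  intro x hx
  induction hx using Submodule.span_induction with
  | mem y hy =>
    rcases hy with h | h
    · subst h; rw [e1]
      exact sub_mem (Submodule.smul_mem _ _ (Submodule.subset_span (by simp)))
        (Submodule.subset_span (by simp))
    · simp only [Set.mem_singleton_iff] at h; subst h; rw [e2]
      exact sub_mem (Submodule.smul_mem _ _ (Submodule.subset_span (by simp)))
        (Submodule.smul_mem _ _ (Submodule.subset_span (by simp)))
  | zero => simp
  | add a b _ _ ha hb => rw [map_add]; exact add_mem ha hb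
  | smul c a _ ha => rw [map_smul]; exact Submodule.smul_mem _ _ ha
end

section
/- Let (ν_k)_{k=1}^K be real numbers with ∑_k ν_k² = 1 and let θ_k ∈ (0, π/2] for each k. If T is a natural number with T + 1 ≥ 100 ∑_k ν_k²/θ_k, then (1/(T+1)) ∑_{t=0}^{T} ∑_k ν_k² cos(2θ_k t) ≤ 1/25. -/
/-!
Each Dirichlet-type sum `∑_{t ≤ T} cos (2θt)` telescopes against `2 sin θ` and so is at most
`1 / sin θ ≤ π / (2θ)` (Jordan's inequality). Summing with the weights `ν_k²` bounds the whole
double sum by `(π/2) ∑_k ν_k²/θ_k ≤ (π/200) (T + 1)`, and `π/200 < 1/25`.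
-/

open Real Finset

theorem two_mul_sin_mul_sum_range_cos (θ : ℝ) (n : ℕ) :
    2 * sin θ * ∑ t ∈ range n, cos (2 * θ * t) = sin ((2 * n - 1) * θ) + sin θ := by
  induction n with
  | zero => simp [neg_mul, sin_neg]
  | succ n ih =>
    have hstep : 2 * sin θ * cos (2 * θ * n) = sin ((2 * n + 1) * θ) - sin ((2 * n - 1) * θ) := by
      rw [sin_sub_sin]
      ring_nf
    rw [sum_range_succ, mul_add, ih, hstep]
    push_cast
    ring_nf

theorem abs_sum_range_cos_le {θ : ℝ} (hθ : sin θ ≠ 0) (n : ℕ) :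
    |∑ t ∈ range n, cos (2 * θ * t)| ≤ 1 / |sin θ| := by
  have hsum : ∑ t ∈ range n, cos (2 * θ * t) = (sin ((2 * n - 1) * θ) + sin θ) / (2 * sin θ) := by
    rw [eq_div_iff (by positivity), mul_comm, two_mul_sin_mul_sum_range_cos]
  have hnum : |sin ((2 * n - 1) * θ) + sin θ| ≤ 2 :=
    (abs_add_le _ _).trans (by linarith [abs_sin_le_one ((2 * n - 1) * θ), abs_sin_le_one θ])
  rw [hsum, abs_div, abs_mul, abs_two, div_le_div_iff₀ (by positivity) (by positivity)]
  nlinarith [abs_nonneg (sin θ)]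

theorem sum_range_cos_le_pi_div {θ : ℝ} (hθ : θ ∈ Set.Ioc 0 (π / 2)) (n : ℕ) :
    ∑ t ∈ range n, cos (2 * θ * t) ≤ π / 2 / θ := by
  obtain ⟨hθ0, hθπ⟩ := hθ
  have hsin : 0 < sin θ := sin_pos_of_pos_of_lt_pi hθ0 (by linarith [pi_pos])
  calc ∑ t ∈ range n, cos (2 * θ * t) ≤ 1 / sin θ := by
        simpa [abs_of_pos hsin] using (le_abs_self _).trans (abs_sum_range_cos_le hsin.ne' n)
    _ ≤ 1 / (2 / π * θ) := one_div_le_one_div_of_le (by positivity) (mul_le_sin hθ0.le hθπ)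
    _ = π / 2 / θ := by field_simp

theorem sum_range_sum_mul_cos_le {ι : Type*} (s : Finset ι) (w θ : ι → ℝ)
    (hw : ∀ k ∈ s, 0 ≤ w k) (hθ : ∀ k ∈ s, θ k ∈ Set.Ioc 0 (π / 2)) (n : ℕ) :
    ∑ t ∈ range n, ∑ k ∈ s, w k * cos (2 * θ k * t) ≤ π / 2 * ∑ k ∈ s, w k / θ k := by
  rw [sum_comm, mul_sum]
  refine sum_le_sum fun k hk => ?_
  calc ∑ t ∈ range n, w k * cos (2 * θ k * t) ≤ w k * (π / 2 / θ k) := by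
        rw [← mul_sum]
        exact mul_le_mul_of_nonneg_left (sum_range_cos_le_pi_div (hθ k hk) n) (hw k hk)
    _ = π / 2 * (w k / θ k) := by ring

theorem stmt_14_general {K : ℕ} (ν θ : Fin K → ℝ)
    (hθ : ∀ k, θ k ∈ Set.Ioc (0 : ℝ) (Real.pi / 2))
    (T : ℕ) (hT : (T : ℝ) + 1 ≥ 100 * ∑ k, ν k ^ 2 / θ k) :
    (1 / ((T : ℝ) + 1)) * ∑ t ∈ Finset.range (T + 1), ∑ k, ν k ^ 2 * Real.cos (2 * θ k * t)
      ≤ 1 / 25 := by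
  have hT0 : (0 : ℝ) < T + 1 := by positivity
  rw [one_div_mul_eq_div, div_le_iff₀ hT0]
  calc ∑ t ∈ range (T + 1), ∑ k, ν k ^ 2 * cos (2 * θ k * t)
      ≤ π / 2 * ∑ k, ν k ^ 2 / θ k :=
        sum_range_sum_mul_cos_le univ _ θ (fun k _ => sq_nonneg _) (fun k _ => hθ k) (T + 1)
    _ ≤ π / 2 * ((T + 1) / 100) := by gcongr; linarith
    _ ≤ 1 / 25 * (T + 1) := by nlinarith [pi_lt_four]

/-- If `∑_k ν_k² = 1`, each `θ_k ∈ (0, π/2]`, and `T + 1 ≥ 100 ∑_k ν_k²/θ_k`, then the average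
overlap `(1/(T+1)) ∑_{t=0}^{T} ∑_k ν_k² cos(2 θ_k t)` is at most `1/25`. -/
theorem stmt_14 {K : ℕ} (ν θ : Fin K → ℝ)
    (hν : ∑ k, ν k ^ 2 = 1)
    (hθ : ∀ k, θ k ∈ Set.Ioc (0 : ℝ) (Real.pi / 2))
    (T : ℕ) (hT : (T : ℝ) + 1 ≥ 100 * ∑ k, ν k ^ 2 / θ k) :
    (1 / ((T : ℝ) + 1)) * ∑ t ∈ Finset.range (T + 1), ∑ k, ν k ^ 2 * Real.cos (2 * θ k * t)
      ≤ 1 / 25 :=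
  stmt_14_general ν θ hθ T hT
end

section
/- Let A, B ⊆ {0,1}^N be finite sets of boolean strings and let R ⊆ A × B be a relation such that every pair (x, y) ∈ R differs in exactly one coordinate, denoted i(x,y). Suppose every x ∈ A has at least m partners y with (x,y) ∈ R, and every y ∈ B has at least m' partners x with (x,y) ∈ R. For each x ∈ A let (α_{x,i})_{i=1}^N be reals with ∑_i α_{x,i}² ≤ 1, and for each y ∈ B let (β_{y,i})_{i=1}^N be reals with ∑_i β_{y,i}² ≤ 1. Then ∑_{(x,y) ∈ R} |α_{x, i(x,y)}| · |β_{y, i(x,y)}| ≤ |R| / √(m m'). -/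
/-!
A relation pair `(x, y)` is recovered from one endpoint and the flipped coordinate `ι (x, y)`, so
`ι` is injective on every row and column of `R`. Hence `∑_{p ∈ R} α_{p.1, ι p}² ≤ |A| ≤ |R| / m`
and `∑_{p ∈ R} β_{p.2, ι p}² ≤ |B| ≤ |R| / m'`, and Cauchy–Schwarz gives the bound.
-/

open Finset

theorem Bool.eq_update_not_of_card_filter_ne_eq_one {n : Type*} [Fintype n] [DecidableEq n]
    {x y : n → Bool} {i : n} (hcard : #{j | x j ≠ y j} = 1) (hi : x i ≠ y i) :
    y = Function.update x i (!x i) := by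
  funext j
  rcases eq_or_ne j i with rfl | hji
  · rw [Function.update_self]
    exact Bool.eq_not_of_ne hi.symm
  · rw [Function.update_of_ne hji]
    by_contra hj
    exact hji (card_le_one.mp hcard.le j (by simpa [eq_comm] using hj) i (by simpa using hi))

section OneBitRelation

variable {n : Type*} [Fintype n] [DecidableEq n] {R : Finset ((n → Bool) × (n → Bool))}
  {ι : (n → Bool) × (n → Bool) → n}

theorem injOn_filter_fst_eq (hone : ∀ p ∈ R, #{i | p.1 i ≠ p.2 i} = 1)
    (hι : ∀ p ∈ R, p.1 (ι p) ≠ p.2 (ι p)) (x : n → Bool) :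
    Set.InjOn ι {p ∈ R | p.1 = x} := by
  intro p hp q hq hpq
  refine Prod.ext (hp.2.trans hq.2.symm) ?_
  rw [Bool.eq_update_not_of_card_filter_ne_eq_one (hone p hp.1) (hι p hp.1),
    Bool.eq_update_not_of_card_filter_ne_eq_one (hone q hq.1) (hι q hq.1), hp.2, hq.2, hpq]

theorem injOn_filter_snd_eq (hone : ∀ p ∈ R, #{i | p.1 i ≠ p.2 i} = 1)
    (hι : ∀ p ∈ R, p.1 (ι p) ≠ p.2 (ι p)) (y : n → Bool) :
    Set.InjOn ι {p ∈ R | p.2 = y} := by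
  have hone' : ∀ p ∈ R, #{i | p.2 i ≠ p.1 i} = 1 := by
    simpa only [ne_comm] using hone
  have hι' : ∀ p ∈ R, p.2 (ι p) ≠ p.1 (ι p) := fun p hp => (hι p hp).symm
  intro p hp q hq hpq
  refine Prod.ext ?_ (hp.2.trans hq.2.symm)
  rw [Bool.eq_update_not_of_card_filter_ne_eq_one (hone' p hp.1) (hι' p hp.1),
    Bool.eq_update_not_of_card_filter_ne_eq_one (hone' q hq.1) (hι' q hq.1), hp.2, hq.2, hpq]

end OneBitRelation

theorem Finset.sum_le_sum_sum_of_injOn_fiberwise {γ α κ : Type*} [DecidableEq α]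
    [DecidableEq κ] [Fintype κ] {R : Finset γ} {A : Finset α} {π : γ → α} {ι : γ → κ}
    {f : α → κ → ℝ} (hπ : ∀ p ∈ R, π p ∈ A) (hinj : ∀ x ∈ A, Set.InjOn ι {p ∈ R | π p = x})
    (hf : ∀ x i, 0 ≤ f x i) :
    ∑ p ∈ R, f (π p) (ι p) ≤ ∑ x ∈ A, ∑ i, f x i := by
  rw [← sum_fiberwise_of_maps_to hπ]
  refine sum_le_sum fun x hx => ?_
  calc ∑ p ∈ R with π p = x, f (π p) (ι p)
      = ∑ p ∈ R with π p = x, f x (ι p) := sum_congr rfl fun p hp => by rw [(mem_filter.mp hp).2]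
    _ = ∑ i ∈ image ι {p ∈ R | π p = x}, f x i :=
        (sum_image (by simpa only [coe_filter] using hinj x hx)).symm
    _ ≤ ∑ i, f x i := sum_le_univ_sum_of_nonneg (hf x)

theorem Finset.card_le_div_of_le_card_fiberwise {γ α : Type*} [DecidableEq α] {R : Finset γ}
    {A : Finset α} {π : γ → α} {m : ℕ} (hm : 0 < m) (hπ : ∀ p ∈ R, π p ∈ A)
    (hA : ∀ x ∈ A, m ≤ #{p ∈ R | π p = x}) :
    (#A : ℝ) ≤ #R / m := by
  rw [le_div_iff₀ (by exact_mod_cast hm), mul_comm]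
  exact_mod_cast mul_card_image_le_card_of_maps_to hπ m hA

/-- Adversary progress inequality: if `R ⊆ A × B` relates boolean strings differing in exactly
one coordinate `ι(x,y)`, every `x ∈ A` has at least `m` partners, every `y ∈ B` has at least
`m'` partners, and the amplitude vectors `α_x`, `β_y` have squared ℓ²-norm at most `1`, then
`∑_{(x,y) ∈ R} |α_{x,ι(x,y)}| · |β_{y,ι(x,y)}| ≤ |R| / √(m m')`. -/
theorem stmt_16 {N : ℕ}
    (A B : Finset (Fin N → Bool))
    (R : Finset ((Fin N → Bool) × (Fin N → Bool)))
    (hR : R ⊆ A ×ˢ B)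
    (hone : ∀ p ∈ R, (Finset.univ.filter fun i : Fin N => p.1 i ≠ p.2 i).card = 1)
    (ι : (Fin N → Bool) × (Fin N → Bool) → Fin N)
    (hι : ∀ p ∈ R, p.1 (ι p) ≠ p.2 (ι p))
    (m m' : ℕ) (hm : 0 < m) (hm' : 0 < m')
    (hA : ∀ x ∈ A, m ≤ (R.filter fun p => p.1 = x).card)
    (hB : ∀ y ∈ B, m' ≤ (R.filter fun p => p.2 = y).card)
    (α β : (Fin N → Bool) → Fin N → ℝ)
    (hα : ∀ x ∈ A, ∑ i, α x i ^ 2 ≤ 1)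
    (hβ : ∀ y ∈ B, ∑ i, β y i ^ 2 ≤ 1) :
    ∑ p ∈ R, |α p.1 (ι p)| * |β p.2 (ι p)| ≤ (R.card : ℝ) / Real.sqrt ((m : ℝ) * (m' : ℝ)) := by
  have hRA : ∀ p ∈ R, p.1 ∈ A := fun p hp => (mem_product.mp (hR hp)).1
  have hRB : ∀ p ∈ R, p.2 ∈ B := fun p hp => (mem_product.mp (hR hp)).2
  have hαR : ∑ p ∈ R, |α p.1 (ι p)| ^ 2 ≤ #R / m := calc
    ∑ p ∈ R, |α p.1 (ι p)| ^ 2 ≤ ∑ x ∈ A, ∑ i, α x i ^ 2 := by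
      simpa only [sq_abs] using sum_le_sum_sum_of_injOn_fiberwise (f := fun x i => α x i ^ 2)
        hRA (fun x _ => injOn_filter_fst_eq hone hι x) fun _ _ => sq_nonneg _
    _ ≤ #A := by simpa using sum_le_sum hα
    _ ≤ #R / m := card_le_div_of_le_card_fiberwise hm hRA hA
  have hβR : ∑ p ∈ R, |β p.2 (ι p)| ^ 2 ≤ #R / m' := calc
    ∑ p ∈ R, |β p.2 (ι p)| ^ 2 ≤ ∑ y ∈ B, ∑ i, β y i ^ 2 := by
      simpa only [sq_abs] using sum_le_sum_sum_of_injOn_fiberwise (f := fun y i => β y i ^ 2)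
        hRB (fun y _ => injOn_filter_snd_eq hone hι y) fun _ _ => sq_nonneg _
    _ ≤ #B := by simpa using sum_le_sum hβ
    _ ≤ #R / m' := card_le_div_of_le_card_fiberwise hm' hRB hB
  calc ∑ p ∈ R, |α p.1 (ι p)| * |β p.2 (ι p)|
      ≤ √(∑ p ∈ R, |α p.1 (ι p)| ^ 2) * √(∑ p ∈ R, |β p.2 (ι p)| ^ 2) :=
        Real.sum_mul_le_sqrt_mul_sqrt _ _ _
    _ ≤ √(#R / m) * √(#R / m') := by gcongr
    _ = #R / √(m * m') := by
        rw [← Real.sqrt_mul (by positivity), div_mul_div_comm, ← sq,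
          Real.sqrt_div' _ (by positivity), Real.sqrt_sq (by positivity)]
end
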